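/- For δ ∈ (0, 1/2) and any measurable u : ℝ^d → ℂ, one has ∫_{ℝ^d} |u(x)|²/(|x|^{1/2-δ} + |x|^{1/2+δ})² dx ≤ c_δ² · sup_{R>0} (1/R) ∫_{|x|≤R} |u|² dx, where c_δ² = Σ_{j∈ℤ} 2/(2^{-δj} + 2^{δj})². -/

import Mathlib

open MeasureTheory ENNReal

private lemma key_alg (δ jr : ℝ) :
    (((2:ℝ) ^ jr) ^ ((1:ℝ)/2 - δ) + ((2:ℝ) ^ jr) ^ ((1:ℝ)/2 + δ)) ^ 2
      = (2:ℝ) ^ jr * ((2:ℝ) ^ (-(δ * jr)) + (2:ℝ) ^ (δ * jr)) ^ 2 := by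
  have h2 : (0:ℝ) < 2 := two_pos
  have e1 : ((2:ℝ) ^ jr) ^ ((1:ℝ)/2 - δ) = (2:ℝ) ^ (jr/2) * (2:ℝ) ^ (-(δ * jr)) := by
    rw [← Real.rpow_mul h2.le, ← Real.rpow_add h2]
    congr 1; ring
  have e2 : ((2:ℝ) ^ jr) ^ ((1:ℝ)/2 + δ) = (2:ℝ) ^ (jr/2) * (2:ℝ) ^ (δ * jr) := by
    rw [← Real.rpow_mul h2.le, ← Real.rpow_add h2]
    congr 1; ring
  have e3 : (2:ℝ) ^ (jr/2) * (2:ℝ) ^ (jr/2) = (2:ℝ) ^ jr := by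
    rw [← Real.rpow_add h2]; congr 1; ring
  rw [e1, e2, ← e3]; ring

private lemma Cj_le (δ : ℝ) (hδ0 : 0 < δ) (j : ℤ) :
    2 / ((2:ℝ) ^ (-(δ * (j:ℝ))) + (2:ℝ) ^ (δ * (j:ℝ))) ^ 2
      ≤ 2 * ((2:ℝ) ^ (-(2*δ))) ^ (j.natAbs) := by
  have h2 : (0:ℝ) < 2 := two_pos
  have hD : (2:ℝ) ^ (δ * |(j:ℝ)|) ≤ (2:ℝ) ^ (-(δ * (j:ℝ))) + (2:ℝ) ^ (δ * (j:ℝ)) := by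
    rcases abs_choice (j:ℝ) with h | h
    · rw [h]
      nlinarith [Real.rpow_pos_of_pos h2 (-(δ * (j:ℝ)))]
    · rw [h]
      have : δ * -(j:ℝ) = -(δ * (j:ℝ)) := by ring
      rw [this]
      nlinarith [Real.rpow_pos_of_pos h2 (δ * (j:ℝ))]
  have hDpos : (0:ℝ) < (2:ℝ) ^ (δ * |(j:ℝ)|) := Real.rpow_pos_of_pos h2 _
  have hsq : ((2:ℝ) ^ (δ * |(j:ℝ)|)) ^ 2 ≤ ((2:ℝ) ^ (-(δ * (j:ℝ))) + (2:ℝ) ^ (δ * (j:ℝ))) ^ 2 :=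
    pow_le_pow_left₀ hDpos.le hD 2
  have h1 : 2 / ((2:ℝ) ^ (-(δ * (j:ℝ))) + (2:ℝ) ^ (δ * (j:ℝ))) ^ 2
      ≤ 2 / ((2:ℝ) ^ (δ * |(j:ℝ)|)) ^ 2 :=
    div_le_div_of_nonneg_left (by norm_num) (by positivity) hsq
  refine h1.trans (le_of_eq ?_)
  have e : ((2:ℝ) ^ (-(2*δ))) ^ (j.natAbs) = (2:ℝ) ^ (-(2*δ) * (j.natAbs : ℝ)) := by
    rw [← Real.rpow_natCast ((2:ℝ) ^ (-(2*δ))) j.natAbs, ← Real.rpow_mul h2.le]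
  have e2 : ((2:ℝ) ^ (δ * |(j:ℝ)|)) ^ 2 = (2:ℝ) ^ (2 * (δ * |(j:ℝ)|)) := by
    rw [← Real.rpow_natCast ((2:ℝ) ^ (δ * |(j:ℝ)|)) 2, ← Real.rpow_mul h2.le]
    push_cast; ring_nf
  have habs : |(j:ℝ)| = (j.natAbs : ℝ) := by
    rw [← Int.cast_abs, Int.abs_eq_natAbs, Int.cast_natCast]
  rw [e, e2, habs]
  rw [show (2:ℝ) ^ (2 * (δ * (j.natAbs : ℝ))) = ((2:ℝ) ^ (-(2*δ) * (j.natAbs : ℝ)))⁻¹ by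
    rw [← Real.rpow_neg h2.le]; congr 1; ring]
  rw [div_inv_eq_mul]

private lemma summable_C (δ : ℝ) (hδ0 : 0 < δ) :
    Summable (fun j : ℤ => 2 / ((2:ℝ) ^ (-(δ * (j:ℝ))) + (2:ℝ) ^ (δ * (j:ℝ))) ^ 2) := by
  have hr1 : (2:ℝ) ^ (-(2*δ)) < 1 :=
    Real.rpow_lt_one_of_one_lt_of_neg one_lt_two (by linarith)
  have hr0 : (0:ℝ) ≤ (2:ℝ) ^ (-(2*δ)) := (Real.rpow_pos_of_pos two_pos _).le
  have hgeo : Summable (fun n : ℕ => 2 * ((2:ℝ) ^ (-(2*δ))) ^ n) :=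
    (summable_geometric_of_lt_one hr0 hr1).mul_left 2
  have hmaj : Summable (fun j : ℤ => 2 * ((2:ℝ) ^ (-(2*δ))) ^ (j.natAbs)) := by
    refine Summable.of_nat_of_neg ?_ ?_
    · simpa using hgeo
    · simpa using hgeo
  exact hmaj.of_nonneg_of_le (fun j => by positivity) (fun j => Cj_le δ hδ0 j)

/-- Weighted `L²` bound in terms of the Morrey–Campanato norm:
`∫ |u|²/(|x|^{1/2-δ}+|x|^{1/2+δ})² ≤ c_δ² sup_{R>0} R⁻¹ ∫_{|x|≤R} |u|²`. -/
theorem weighted_to_morrey_campanato {d : ℕ} (δ : ℝ) (hδ : δ ∈ Set.Ioo (0 : ℝ) (1 / 2))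
    (u : EuclideanSpace ℝ (Fin d) → ℂ) (hu : Measurable u) :
    ∫⁻ x, ENNReal.ofReal (‖u x‖ ^ 2 / (‖x‖ ^ ((1 : ℝ) / 2 - δ) + ‖x‖ ^ ((1 : ℝ) / 2 + δ)) ^ 2)
      ≤ ENNReal.ofReal (∑' j : ℤ, 2 / ((2 : ℝ) ^ (-(δ * (j : ℝ))) + (2 : ℝ) ^ (δ * (j : ℝ))) ^ 2)
        * ⨆ (R : ℝ) (_ : 0 < R),
            ENNReal.ofReal (1 / R) * ∫⁻ x in {x | ‖x‖ ≤ R}, ENNReal.ofReal (‖u x‖ ^ 2) := by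
  obtain ⟨hδ0, hδ2⟩ := hδ
  have h2 : (0:ℝ) < 2 := two_pos
  have hp : (0:ℝ) < (1:ℝ)/2 - δ := by linarith
  have hq : (0:ℝ) < (1:ℝ)/2 + δ := by linarith
  set g : EuclideanSpace ℝ (Fin d) → ℝ≥0∞ := fun x =>
    ENNReal.ofReal (‖u x‖ ^ 2 / (‖x‖ ^ ((1 : ℝ) / 2 - δ) + ‖x‖ ^ ((1 : ℝ) / 2 + δ)) ^ 2) with hg
  set S : ℝ≥0∞ := ⨆ (R : ℝ) (_ : 0 < R),
      ENNReal.ofReal (1 / R) * ∫⁻ x in {x | ‖x‖ ≤ R}, ENNReal.ofReal (‖u x‖ ^ 2) with hS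
  set C : ℤ → ℝ := fun j => 2 / ((2:ℝ) ^ (-(δ * (j:ℝ))) + (2:ℝ) ^ (δ * (j:ℝ))) ^ 2 with hC
  set A : ℤ → Set (EuclideanSpace ℝ (Fin d)) := fun j =>
    {x | (2:ℝ) ^ ((j:ℝ)) ≤ ‖x‖ ∧ ‖x‖ < (2:ℝ) ^ ((j:ℝ) + 1)} with hA
  have hAmeas : ∀ j, MeasurableSet (A j) :=
    fun j => (measurableSet_le measurable_const measurable_norm).inter
      (measurableSet_lt measurable_norm measurable_const)
  have hAdisj : Pairwise (Function.onFun Disjoint A) := by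
    have key : ∀ i j : ℤ, i < j → Disjoint (A i) (A j) := by
      intro i j hij
      rw [Set.disjoint_left]
      rintro x ⟨_, hx2⟩ ⟨hx3, _⟩
      have h1 : ((i:ℝ) + 1) ≤ (j:ℝ) := by exact_mod_cast hij
      have : (2:ℝ) ^ ((i:ℝ) + 1) ≤ (2:ℝ) ^ ((j:ℝ)) :=
        Real.rpow_le_rpow_left_iff one_lt_two |>.mpr h1
      linarith
    intro i j hij
    rcases lt_or_gt_of_ne hij with h | h
    · exact key i j h
    · exact (key j i h).symm
  have hUnion : (⋃ j, A j) = {x : EuclideanSpace ℝ (Fin d) | 0 < ‖x‖} := by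
    ext x
    simp only [Set.mem_iUnion, Set.mem_setOf_eq, hA]
    constructor
    · rintro ⟨j, hj1, _⟩
      exact lt_of_lt_of_le (Real.rpow_pos_of_pos h2 _) hj1
    · intro hx
      obtain ⟨n, hn1, hn2⟩ := exists_mem_Ico_zpow hx one_lt_two
      refine ⟨n, ?_, ?_⟩
      · rwa [Real.rpow_intCast]
      · rw [show ((n:ℝ) + 1) = ((n + 1 : ℤ) : ℝ) by push_cast; ring, Real.rpow_intCast]
        exact hn2
  have humeas : Measurable fun x => ENNReal.ofReal (‖u x‖ ^ 2) :=
    ((hu.norm.pow_const 2)).ennreal_ofReal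
  -- reduce to integral over the union of annuli
  have hsplit : ∫⁻ x, g x = ∫⁻ x in ⋃ j, A j, g x := by
    have hT : MeasurableSet (⋃ j, A j) := MeasurableSet.iUnion hAmeas
    rw [← lintegral_add_compl g hT]
    have hzero : ∫⁻ x in (⋃ j, A j)ᶜ, g x = 0 := by
      refine le_antisymm ?_ (zero_le)
      calc ∫⁻ x in (⋃ j, A j)ᶜ, g x ≤ ∫⁻ _ in (⋃ j, A j)ᶜ, 0 := by
            refine setLIntegral_mono measurable_const ?_
            intro x hx
            rw [hUnion] at hx
            have hx0 : ‖x‖ = 0 := le_antisymm (not_lt.mp hx) (norm_nonneg x)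
            simp only [hg, hx0, Real.zero_rpow hp.ne', Real.zero_rpow hq.ne']
            norm_num
        _ = 0 := lintegral_zero
    rw [hzero, add_zero]
  rw [show (∫⁻ x, ENNReal.ofReal (‖u x‖ ^ 2 /
        (‖x‖ ^ ((1 : ℝ) / 2 - δ) + ‖x‖ ^ ((1 : ℝ) / 2 + δ)) ^ 2)) = ∫⁻ x, g x from rfl,
    hsplit, lintegral_iUnion hAmeas hAdisj]
  -- per-annulus estimate
  have hann : ∀ j : ℤ, ∫⁻ x in A j, g x ≤ ENNReal.ofReal (C j) * S := by
    intro j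
    set K : ℝ := ((2:ℝ) ^ ((j:ℝ))) ^ ((1:ℝ)/2 - δ) + ((2:ℝ) ^ ((j:ℝ))) ^ ((1:ℝ)/2 + δ) with hK
    have hKpos : 0 < K := by positivity
    have hstep1 : ∫⁻ x in A j, g x
        ≤ ∫⁻ x in A j, ENNReal.ofReal (1 / K ^ 2) * ENNReal.ofReal (‖u x‖ ^ 2) := by
      refine setLIntegral_mono (measurable_const.mul humeas) ?_
      rintro x ⟨hx1, _⟩
      have hDx : K ≤ ‖x‖ ^ ((1:ℝ)/2 - δ) + ‖x‖ ^ ((1:ℝ)/2 + δ) :=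
        add_le_add (Real.rpow_le_rpow (Real.rpow_pos_of_pos h2 _).le hx1 hp.le)
          (Real.rpow_le_rpow (Real.rpow_pos_of_pos h2 _).le hx1 hq.le)
      have hdiv : ‖u x‖ ^ 2 / (‖x‖ ^ ((1:ℝ)/2 - δ) + ‖x‖ ^ ((1:ℝ)/2 + δ)) ^ 2
          ≤ 1 / K ^ 2 * ‖u x‖ ^ 2 := by
        calc ‖u x‖ ^ 2 / (‖x‖ ^ ((1:ℝ)/2 - δ) + ‖x‖ ^ ((1:ℝ)/2 + δ)) ^ 2
            ≤ ‖u x‖ ^ 2 / K ^ 2 :=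
              div_le_div_of_nonneg_left (by positivity) (by positivity)
                (pow_le_pow_left₀ hKpos.le hDx 2)
          _ = 1 / K ^ 2 * ‖u x‖ ^ 2 := by ring
      rw [hg, ← ENNReal.ofReal_mul (by positivity)]
      exact ENNReal.ofReal_le_ofReal hdiv
    have hstep2 : ∫⁻ x in A j, ENNReal.ofReal (1 / K ^ 2) * ENNReal.ofReal (‖u x‖ ^ 2)
        = ENNReal.ofReal (1 / K ^ 2) * ∫⁻ x in A j, ENNReal.ofReal (‖u x‖ ^ 2) :=
      lintegral_const_mul _ humeas
    have hsub : A j ⊆ {x : EuclideanSpace ℝ (Fin d) | ‖x‖ ≤ (2:ℝ) ^ ((j:ℝ) + 1)} :=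
      fun x hx => le_of_lt hx.2
    have hstep3 : ∫⁻ x in A j, ENNReal.ofReal (‖u x‖ ^ 2)
        ≤ ∫⁻ x in {x : EuclideanSpace ℝ (Fin d) | ‖x‖ ≤ (2:ℝ) ^ ((j:ℝ) + 1)},
            ENNReal.ofReal (‖u x‖ ^ 2) := lintegral_mono_set hsub
    -- constant identity
    have hKeq : 1 / K ^ 2 = C j * (1 / (2:ℝ) ^ ((j:ℝ) + 1)) := by
      have hK2 : K ^ 2 = (2:ℝ) ^ ((j:ℝ))
          * ((2:ℝ) ^ (-(δ * (j:ℝ))) + (2:ℝ) ^ (δ * (j:ℝ))) ^ 2 := key_alg δ (j:ℝ)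
      have hR : (2:ℝ) ^ ((j:ℝ) + 1) = (2:ℝ) ^ ((j:ℝ)) * 2 := by
        rw [Real.rpow_add h2, Real.rpow_one]
      have hDj : (0:ℝ) < (2:ℝ) ^ (-(δ * (j:ℝ))) + (2:ℝ) ^ (δ * (j:ℝ)) := by positivity
      have h2j : (0:ℝ) < (2:ℝ) ^ ((j:ℝ)) := Real.rpow_pos_of_pos h2 _
      rw [hK2, hR, hC]
      field_simp
    have hsup : ENNReal.ofReal (1 / (2:ℝ) ^ ((j:ℝ) + 1))
        * ∫⁻ x in {x : EuclideanSpace ℝ (Fin d) | ‖x‖ ≤ (2:ℝ) ^ ((j:ℝ) + 1)},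
            ENNReal.ofReal (‖u x‖ ^ 2) ≤ S := by
      rw [hS]
      exact le_iSup₂ (f := fun (R : ℝ) (_ : 0 < R) => ENNReal.ofReal (1 / R)
        * ∫⁻ x in {x : EuclideanSpace ℝ (Fin d) | ‖x‖ ≤ R}, ENNReal.ofReal (‖u x‖ ^ 2))
        ((2:ℝ) ^ ((j:ℝ) + 1)) (Real.rpow_pos_of_pos h2 _)
    calc ∫⁻ x in A j, g x
        ≤ ENNReal.ofReal (1 / K ^ 2) * ∫⁻ x in A j, ENNReal.ofReal (‖u x‖ ^ 2) := by
          rw [← hstep2]; exact hstep1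
      _ ≤ ENNReal.ofReal (1 / K ^ 2)
            * ∫⁻ x in {x : EuclideanSpace ℝ (Fin d) | ‖x‖ ≤ (2:ℝ) ^ ((j:ℝ) + 1)},
                ENNReal.ofReal (‖u x‖ ^ 2) := mul_le_mul_right hstep3 _
      _ = ENNReal.ofReal (C j) * (ENNReal.ofReal (1 / (2:ℝ) ^ ((j:ℝ) + 1))
            * ∫⁻ x in {x : EuclideanSpace ℝ (Fin d) | ‖x‖ ≤ (2:ℝ) ^ ((j:ℝ) + 1)},
                ENNReal.ofReal (‖u x‖ ^ 2)) := by
          rw [hKeq, ENNReal.ofReal_mul (by positivity), mul_assoc]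
      _ ≤ ENNReal.ofReal (C j) * S := mul_le_mul_right hsup _
  calc ∑' j : ℤ, ∫⁻ x in A j, g x
      ≤ ∑' j : ℤ, ENNReal.ofReal (C j) * S := ENNReal.tsum_le_tsum hann
    _ = (∑' j : ℤ, ENNReal.ofReal (C j)) * S := ENNReal.tsum_mul_right
    _ = ENNReal.ofReal (∑' j : ℤ, C j) * S := by
        rw [ENNReal.ofReal_tsum_of_nonneg (fun j => by positivity) (summable_C δ hδ0)]
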